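/- Let (N, M, E) be a bipartite graph with finite disjoint vertex sets N, M and edges E ⊆ N × M. The number of distinct pairs (𝒩, ℳ) that are maximal bicliques with ℳ-side isolated (i.e., 𝒩 nonempty, I(m) = 𝒩 for all m ∈ ℳ, and ℳ = {m ∈ M : I(m) = 𝒩} nonempty) is at most |M|. Consequently, the number of distinct maximal half isolated (MHI) bicliques of the graph is at most |M| + |N|. -/
import Mathlib


/-- `I' E m` is the neighborhood `I(m) = {n : (n, m) ∈ E}` of a target node `m`. -/
def I' {α β : Type*} [DecidableEq α] [DecidableEq β] (E : Finset (α × β)) (m : β) :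
    Finset α := (E.filter fun e => e.2 = m).image Prod.fst

/-- `H' E n` is the neighborhood `H(n) = {m : (n, m) ∈ E}` of a source node `n`. -/
def H' {α β : Type*} [DecidableEq α] [DecidableEq β] (E : Finset (α × β)) (n : α) :
    Finset β := (E.filter fun e => e.1 = n).image Prod.snd

/-- `(S, T)` is a half isolated (HI) biclique in the bipartite graph `(N, M, E)`:
`S ⊆ N` and `T ⊆ M` are nonempty, every pair in `S × T` is an edge, and at least one
of the two sides is isolated. -/
def IsHIBiclique {α β : Type*} [DecidableEq α] [DecidableEq β]
    (N : Finset α) (M : Finset β) (E : Finset (α × β))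
    (S : Finset α) (T : Finset β) : Prop :=
  S ⊆ N ∧ T ⊆ M ∧ S.Nonempty ∧ T.Nonempty ∧
    (∀ n ∈ S, ∀ m ∈ T, (n, m) ∈ E) ∧
    ((∀ m ∈ T, I' E m ⊆ S) ∨ (∀ n ∈ S, H' E n ⊆ T))

/-- `(S, T)` is a maximal half isolated (MHI) biclique: an HI biclique not strictly
contained in any HI biclique. -/
def IsMHIBiclique {α β : Type*} [DecidableEq α] [DecidableEq β]
    (N : Finset α) (M : Finset β) (E : Finset (α × β))
    (S : Finset α) (T : Finset β) : Prop :=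
  IsHIBiclique N M E S T ∧
    ∀ S₁ T₁, IsHIBiclique N M E S₁ T₁ → S ⊆ S₁ → T ⊆ T₁ → (S₁, T₁) = (S, T)

lemma mem_I' {α β : Type*} [DecidableEq α] [DecidableEq β] {E : Finset (α × β)}
    {n : α} {m : β} : n ∈ I' E m ↔ (n, m) ∈ E := by
  constructor
  · intro h
    simp only [I', Finset.mem_image, Finset.mem_filter] at h
    obtain ⟨e, ⟨he, h2⟩, h1⟩ := h
    rw [← h1, ← h2]; exact he
  · intro h
    simp only [I', Finset.mem_image, Finset.mem_filter]
    exact ⟨(n, m), ⟨h, rfl⟩, rfl⟩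

lemma mem_H' {α β : Type*} [DecidableEq α] [DecidableEq β] {E : Finset (α × β)}
    {n : α} {m : β} : m ∈ H' E n ↔ (n, m) ∈ E := by
  constructor
  · intro h
    simp only [H', Finset.mem_image, Finset.mem_filter] at h
    obtain ⟨e, ⟨he, h1⟩, h2⟩ := h
    rw [← h1, ← h2]; exact he
  · intro h
    simp only [H', Finset.mem_image, Finset.mem_filter]
    exact ⟨(n, m), ⟨h, rfl⟩, rfl⟩

/-- the number of maximal bicliques with isolated `ℳ`-side is at most `|M|`,
and the number of MHI bicliques is at most `|M| + |N|`. -/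
theorem stmt9 {α β : Type*} [DecidableEq α] [DecidableEq β]
    (N : Finset α) (M : Finset β) (E : Finset (α × β)) (hE : E ⊆ N ×ˢ M) :
    ({p : Finset α × Finset β | p.1.Nonempty ∧ (∀ m ∈ p.2, I' E m = p.1) ∧
        p.2 = M.filter (fun m => I' E m = p.1) ∧ p.2.Nonempty}.Finite ∧
      {p : Finset α × Finset β | p.1.Nonempty ∧ (∀ m ∈ p.2, I' E m = p.1) ∧
        p.2 = M.filter (fun m => I' E m = p.1) ∧ p.2.Nonempty}.ncard ≤ M.card) ∧
    ({p : Finset α × Finset β | IsMHIBiclique N M E p.1 p.2}.Finite ∧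
      {p : Finset α × Finset β | IsMHIBiclique N M E p.1 p.2}.ncard ≤ M.card + N.card) := by
  classical
  set f : β → Finset α × Finset β :=
    fun m => (I' E m, M.filter fun m' => I' E m' = I' E m) with hf
  set g : α → Finset α × Finset β :=
    fun n => (N.filter fun n' => H' E n' = H' E n, H' E n) with hg
  have h1 : {p : Finset α × Finset β | p.1.Nonempty ∧ (∀ m ∈ p.2, I' E m = p.1) ∧
      p.2 = M.filter (fun m => I' E m = p.1) ∧ p.2.Nonempty} ⊆ ↑(M.image f) := by
    rintro ⟨S, T⟩ ⟨hS, hT, hTeq, hTne⟩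
    obtain ⟨m, hm⟩ := hTne
    have hmM : m ∈ M := by
      rw [hTeq] at hm; exact (Finset.mem_filter.mp hm).1
    have hIm : I' E m = S := hT m hm
    simp only [Finset.coe_image, Set.mem_image, Finset.mem_coe]
    refine ⟨m, hmM, ?_⟩
    simp only [hf]
    rw [hIm, ← hTeq]
  have h2 : {p : Finset α × Finset β | IsMHIBiclique N M E p.1 p.2} ⊆
      ↑(M.image f ∪ N.image g) := by
    rintro ⟨S, T⟩ ⟨⟨hSN, hTM, hSne, hTne, hbic, hiso⟩, hmax⟩
    simp only [Finset.coe_union, Set.mem_union, Finset.coe_image, Set.mem_image,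
      Finset.mem_coe]
    rcases hiso with hL | hR
    · left
      have hIeq : ∀ m ∈ T, I' E m = S := by
        intro m hm
        refine Finset.Subset.antisymm (hL m hm) fun n hn => ?_
        exact mem_I'.mpr (hbic n hn m hm)
      obtain ⟨m, hm⟩ := hTne
      have hT1 : T ⊆ M.filter (fun m' => I' E m' = S) := fun m' hm' =>
        Finset.mem_filter.mpr ⟨hTM hm', hIeq m' hm'⟩
      have hHI : IsHIBiclique N M E S (M.filter (fun m' => I' E m' = S)) := by
        refine ⟨hSN, Finset.filter_subset _ _, hSne, ⟨m, hT1 hm⟩, ?_, Or.inl ?_⟩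
        · intro n hn m' hm'
          have := (Finset.mem_filter.mp hm').2
          exact mem_I'.mp (this ▸ hn)
        · intro m' hm'
          exact ((Finset.mem_filter.mp hm').2).le
      have := hmax S (M.filter (fun m' => I' E m' = S)) hHI (le_refl _) hT1
      have hTfeq : M.filter (fun m' => I' E m' = S) = T := (Prod.mk.injEq _ _ _ _ ▸ this).2
      refine ⟨m, hTM hm, ?_⟩
      simp only [hf]
      rw [hIeq m hm, hTfeq]
    · right
      have hHeq : ∀ n ∈ S, H' E n = T := by
        intro n hn
        refine Finset.Subset.antisymm (hR n hn) fun m hm => ?_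
        exact mem_H'.mpr (hbic n hn m hm)
      obtain ⟨n, hn⟩ := hSne
      have hS1 : S ⊆ N.filter (fun n' => H' E n' = T) := fun n' hn' =>
        Finset.mem_filter.mpr ⟨hSN hn', hHeq n' hn'⟩
      have hHI : IsHIBiclique N M E (N.filter (fun n' => H' E n' = T)) T := by
        refine ⟨Finset.filter_subset _ _, hTM, ⟨n, hS1 hn⟩, hTne, ?_, Or.inr ?_⟩
        · intro n' hn' m hm
          have := (Finset.mem_filter.mp hn').2
          exact mem_H'.mp (this ▸ hm)
        · intro n' hn'
          exact ((Finset.mem_filter.mp hn').2).le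
      have := hmax (N.filter (fun n' => H' E n' = T)) T hHI hS1 (le_refl _)
      have hSfeq : N.filter (fun n' => H' E n' = T) = S := (Prod.mk.injEq _ _ _ _ ▸ this).1
      refine ⟨n, hSN hn, ?_⟩
      simp only [hg]
      rw [hHeq n hn, hSfeq]
  constructor
  · refine ⟨Set.Finite.subset (M.image f).finite_toSet h1, ?_⟩
    calc _ ≤ (↑(M.image f) : Set (Finset α × Finset β)).ncard :=
          Set.ncard_le_ncard h1 (M.image f).finite_toSet
      _ = (M.image f).card := Set.ncard_coe_finset _
      _ ≤ M.card := Finset.card_image_le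
  · refine ⟨Set.Finite.subset (M.image f ∪ N.image g).finite_toSet h2, ?_⟩
    calc _ ≤ (↑(M.image f ∪ N.image g) : Set (Finset α × Finset β)).ncard :=
          Set.ncard_le_ncard h2 (M.image f ∪ N.image g).finite_toSet
      _ = (M.image f ∪ N.image g).card := Set.ncard_coe_finset _
      _ ≤ (M.image f).card + (N.image g).card := Finset.card_union_le _ _
      _ ≤ M.card + N.card := Nat.add_le_add Finset.card_image_le Finset.card_image_le
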